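/- Let Compress_SR be the LZ77 compression function with self-referencing and unbounded sliding window size W = n over a finite alphabet Σ. Then the global sensitivity for strings of length n satisfies GS ≤ ((∛9/2)·n^{2/3} + (∛3/2)·n^{1/3} + 3)·(2⌈log₂ n⌉ + ⌈log₂|Σ|⌉). -/

import Mathlib

/-- A single LZ77 block `[q, len, c]`. -/
structure LZBlock (α : Type*) where
  q : ℕ
  len : ℕ
  c : α

/-- `s_i` (1-indexed start position of the `i`-th block, `i` 0-indexed). -/
def blockStart {α : Type*} (B : List (LZBlock α)) (i : ℕ) : ℕ :=
  1 + ((B.take i).map (fun b => b.len + 1)).sum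

/-- `f_i` (1-indexed final position of the `i`-th block, `i` 0-indexed). -/
def blockFin {α : Type*} (B : List (LZBlock α)) (i : ℕ) : ℕ :=
  ((B.take (i + 1)).map (fun b => b.len + 1)).sum

/-- `ℓ_i`, recovered as `f_i - s_i`. -/
def lenAt {α : Type*} (B : List (LZBlock α)) (i : ℕ) : ℕ :=
  blockFin B i - blockStart B i

/-- Non-overlapping LZ77 parse, sliding window `W`, of the length-`n` string `w`
(1-indexed positions). -/
def IsLZ77Parse {α : Type*} (W n : ℕ) (w : ℕ → α) (B : List (LZBlock α)) : Prop :=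
  ((B.map (fun b => b.len + 1)).sum = n) ∧
  ∀ i : Fin B.length,
    ((B.get i).c = w (blockStart B i.1 + (B.get i).len)) ∧
    ((B.get i).len = 0 → (B.get i).q = 0) ∧
    (0 < (B.get i).len →
      1 ≤ (B.get i).q ∧
      blockStart B i.1 ≤ (B.get i).q + W ∧
      (B.get i).q + (B.get i).len ≤ blockStart B i.1 ∧
      ∀ d < (B.get i).len, w ((B.get i).q + d) = w (blockStart B i.1 + d)) ∧
    (blockStart B i.1 + (B.get i).len + 1 ≤ n →
      ¬ ∃ q', 1 ≤ q' ∧ blockStart B i.1 ≤ q' + W ∧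
          q' + (B.get i).len + 1 ≤ blockStart B i.1 ∧
          ∀ d ≤ (B.get i).len, w (q' + d) = w (blockStart B i.1 + d))

/-- LZ77 parse with self-referencing (unbounded window). -/
def IsLZ77SRParse {α : Type*} (n : ℕ) (w : ℕ → α) (B : List (LZBlock α)) : Prop :=
  ((B.map (fun b => b.len + 1)).sum = n) ∧
  ∀ i : Fin B.length,
    ((B.get i).c = w (blockStart B i.1 + (B.get i).len)) ∧
    ((B.get i).len = 0 → (B.get i).q = 0) ∧
    (0 < (B.get i).len →
      1 ≤ (B.get i).q ∧
      (B.get i).q < blockStart B i.1 ∧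
      ∀ d < (B.get i).len, w ((B.get i).q + d) = w (blockStart B i.1 + d)) ∧
    (blockStart B i.1 + (B.get i).len + 1 ≤ n →
      ¬ ∃ q', 1 ≤ q' ∧ q' < blockStart B i.1 ∧
          ∀ d ≤ (B.get i).len, w (q' + d) = w (blockStart B i.1 + d))

/-- `w ∼ w'`: strings of length `n` differing in exactly one position. -/
def Neighbor {α : Type*} (n : ℕ) (w w' : ℕ → α) : Prop :=
  ∃ j, 1 ≤ j ∧ j ≤ n ∧ w j ≠ w' j ∧ ∀ i, i ≠ j → w i = w' i

/-- `M_i`: the set of (0-indexed) blocks of `B'` that start inside block `i` of `B`. -/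
def Mset {α : Type*} (B B' : List (LZBlock α)) (i : ℕ) : Finset ℕ :=
  (Finset.range B'.length).filter
    (fun k => blockStart B i ≤ blockStart B' k ∧ blockStart B' k ≤ blockFin B i)

/-- Indices of type-`m` blocks of `B` (relative to `B'`). -/
def typeSet {α : Type*} (B B' : List (LZBlock α)) (m : ℕ) : Finset ℕ :=
  (Finset.range B.length).filter (fun i => (Mset B B' i).card = m)

/-- Number of bits used to encode each block. -/
def codeLen (n cardS : ℕ) : ℕ :=
  2 * Nat.clog 2 n + Nat.clog 2 cardS

/-!
Let `B`, `B'` parse `w`, `w'`, which differ only at position `j`. Every block of `B'` starts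
inside a block of `B`, and each block of `B'` other than the first one starting inside a given
block of `B` follows a block of `B'` that lies, literal included, in the copied part of that block
of `B`. Such an inner block occurs earlier in `w`; since the parse of `w'` could not use that
occurrence, either the block or its source covers `j`. At most one inner block covers `j`. Each
other one lies after `j`, has a source `[r, r + ℓ]` containing `j`, and no two of them share `r`
and `ℓ`, or the later one could have been copied one symbol longer. They thus give distinct pairs
`(j - r, ℓ + 1)` with first entry below the second and second entries summing to at most `n`.
Only `m (m + 1) / 2` such pairs have second entry `≤ m`; summing over `m < M` shows that there are
at most `n / M + M² / 6` of them, which for `M = ⌈x⌉`, `x = (3n)^(1/3)`, is at most `(x² + x) / 2`.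
Hence `|B'| ≤ |B| + (x² + x) / 2 + 1`, and symmetrically.
-/

open Finset

namespace Finset

theorem two_mul_card_filter_snd_le {S : Finset (ℕ × ℕ)} (hS : ∀ p ∈ S, p.1 < p.2)
    (m : ℕ) :
    2 * #(S.filter (·.2 ≤ m)) ≤ m * (m + 1) := by
  have hcard : #(S.filter (·.2 ≤ m)) ≤ #((range (m + 1)).sigma range) := by
    refine card_le_card_of_injOn (fun p => (⟨p.2, p.1⟩ : Σ _ : ℕ, ℕ)) ?_ ?_
    · intro p hp
      simp only [coe_filter, Set.mem_ofPred_eq] at hp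
      simp only [coe_sigma, Set.mem_sigma_iff, coe_range, Set.mem_Iio]
      exact ⟨by omega, hS p hp.1⟩
    · intro p _ p' _ h
      simp only [Sigma.mk.inj_iff, heq_eq_eq] at h
      exact Prod.ext h.2 h.1
  have htri := sum_range_id_mul_two (m + 1)
  rw [card_sigma, sum_congr rfl fun _ _ => card_range _] at hcard
  simp only [add_tsub_cancel_right] at htri
  linarith

theorem sum_card_filter_lt_snd_le (S : Finset (ℕ × ℕ)) (M : ℕ) :
    ∑ m ∈ range M, #(S.filter (m < ·.2)) ≤ ∑ p ∈ S, p.2 := by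
  simp only [card_filter]
  rw [sum_comm]
  refine sum_le_sum fun p _ => ?_
  rw [← card_filter]
  calc #((range M).filter (· < p.2)) ≤ #(range p.2) :=
        card_le_card fun m hm => by simp only [mem_filter, mem_range] at hm ⊢; exact hm.2
    _ = p.2 := card_range _

theorem three_mul_sum_range_mul_succ_add (M : ℕ) :
    3 * ∑ m ∈ range M, m * (m + 1) + M = M ^ 3 := by
  induction M with
  | zero => simp
  | succ M ih => rw [sum_range_succ]; linarith

theorem six_mul_mul_card_le_of_fst_lt_snd {S : Finset (ℕ × ℕ)} {n : ℕ}
    (hS : ∀ p ∈ S, p.1 < p.2) (hsum : ∑ p ∈ S, p.2 ≤ n) (M : ℕ) : 6 * M * #S ≤ 6 * n + M ^ 3 := by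
  have hsplit (m : ℕ) : 2 * #S ≤ 2 * #(S.filter (m < ·.2)) + m * (m + 1) := by
    have := card_filter_add_card_filter_not (s := S) (fun p => p.2 ≤ m)
    simp only [not_le] at this
    have := two_mul_card_filter_snd_le hS m
    omega
  have h2 : 2 * (M * #S) ≤ 2 * n + ∑ m ∈ range M, m * (m + 1) :=
    calc 2 * (M * #S) = ∑ _m ∈ range M, 2 * #S := by
          rw [sum_const, card_range, smul_eq_mul]; ring
      _ ≤ ∑ m ∈ range M, (2 * #(S.filter (m < ·.2)) + m * (m + 1)) :=
          sum_le_sum fun m _ => hsplit m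
      _ = 2 * ∑ m ∈ range M, #(S.filter (m < ·.2)) + ∑ m ∈ range M, m * (m + 1) := by
          rw [sum_add_distrib, mul_sum]
      _ ≤ 2 * n + ∑ m ∈ range M, m * (m + 1) := by
          have := (sum_card_filter_lt_snd_le S M).trans hsum
          omega
  have := three_mul_sum_range_mul_succ_add M
  nlinarith

end Finset

theorem le_of_forall_nat_six_mul_le {x c : ℝ} (hx : 1 ≤ x)
    (h : ∀ M : ℕ, 6 * M * c ≤ 2 * x ^ 3 + M ^ 3) :
    c ≤ x ^ 2 / 2 + x / 2 := by
  set M := ⌈x⌉₊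
  have hxM : x ≤ M := Nat.le_ceil x
  have hMx : (M : ℝ) < x + 1 := Nat.ceil_lt_add_one (by linarith)
  -- `M³ + 2x³ - 3M(x² + x)` minus its chord over `[x, x + 1]` is `(M - x)(M - x - 1)(M + 2x + 1)`
  have hcubic : (M : ℝ) ^ 3 + 2 * x ^ 3 ≤ 3 * M * (x ^ 2 + x) := by
    nlinarith [mul_nonneg (mul_nonneg (sub_nonneg.2 hxM) (sub_nonneg.2 hMx.le))
      (by linarith : (0 : ℝ) ≤ M + 2 * x + 1)]
  have hM : (0 : ℝ) < M := by linarith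
  have := h M
  nlinarith

theorem Finset.card_le_of_fst_lt_snd {S : Finset (ℕ × ℕ)} {n : ℕ} (hS : ∀ p ∈ S, p.1 < p.2)
    (hsum : ∑ p ∈ S, p.2 ≤ n) :
    (#S : ℝ) ≤ (9 : ℝ) ^ ((1 : ℝ) / 3) / 2 * (n : ℝ) ^ ((2 : ℝ) / 3)
      + (3 : ℝ) ^ ((1 : ℝ) / 3) / 2 * (n : ℝ) ^ ((1 : ℝ) / 3) := by
  obtain rfl | ⟨p, hp⟩ := S.eq_empty_or_nonempty
  · simp only [card_empty, Nat.cast_zero]; positivity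
  have hn : (1 : ℝ) ≤ n := by
    have := (single_le_sum (fun _ _ => Nat.zero_le _) hp).trans hsum
    have := hS p hp
    exact_mod_cast (by omega : 1 ≤ n)
  set x : ℝ := (3 * n : ℝ) ^ ((1 : ℝ) / 3) with hx
  have hx3 : x ^ 3 = 3 * n := by
    rw [hx, one_div, ← Nat.cast_ofNat (R := ℝ) (n := 3),
      Real.rpow_inv_natCast_pow (by positivity) (by norm_num)]
  have hx1 : 1 ≤ x := Real.one_le_rpow (by linarith) (by norm_num)
  have hx2 : x ^ 2 = (9 : ℝ) ^ ((1 : ℝ) / 3) * (n : ℝ) ^ ((2 : ℝ) / 3) := by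
    rw [hx, ← Real.rpow_natCast, ← Real.rpow_mul (by positivity),
      Real.mul_rpow (by norm_num) (by positivity), show (9 : ℝ) = 3 ^ (2 : ℝ) by norm_num,
      ← Real.rpow_mul (by norm_num)]
    norm_num
  have hx' : x = (3 : ℝ) ^ ((1 : ℝ) / 3) * (n : ℝ) ^ ((1 : ℝ) / 3) :=
    Real.mul_rpow (by norm_num) (by positivity)
  have := le_of_forall_nat_six_mul_le (c := #S) hx1 fun M => by
    have := six_mul_mul_card_le_of_fst_lt_snd hS hsum M
    rw [hx3]
    exact_mod_cast (by omega : 6 * M * #S ≤ 2 * (3 * n) + M ^ 3)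
  rw [hx2, hx'] at this
  linarith

section Blocks

variable {α : Type*} (B : List (LZBlock α))

theorem blockStart_succ (i : ℕ) : blockStart B (i + 1) = blockFin B i + 1 := by
  unfold blockStart blockFin; omega

theorem blockFin_eq {i : ℕ} (hi : i < B.length) :
    blockFin B i = blockStart B i + B[i].len := by
  simp only [blockFin, blockStart, List.take_add_one, List.getElem?_eq_getElem hi,
    Option.toList_some, List.map_append, List.sum_append, List.map_cons, List.map_nil,
    List.sum_cons, List.sum_nil]
  omega

theorem lenAt_eq {i : ℕ} (hi : i < B.length) : lenAt B i = B[i].len := by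
  rw [lenAt, blockFin_eq B hi]; omega

theorem blockStart_succ_eq {i : ℕ} (hi : i < B.length) :
    blockStart B (i + 1) = blockStart B i + lenAt B i + 1 := by
  rw [blockStart_succ, blockFin_eq B hi, lenAt_eq B hi]

theorem one_le_blockStart (i : ℕ) : 1 ≤ blockStart B i := by
  unfold blockStart; omega

theorem blockStart_mono : Monotone (blockStart B) := by
  refine monotone_nat_of_le_succ fun i => ?_
  rcases lt_or_ge i B.length with hi | hi
  · rw [blockStart_succ_eq B hi]; omega
  · simp only [blockStart, List.take_of_length_le hi, List.take_of_length_le (hi.trans i.le_succ),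
      le_refl]

theorem blockStart_lt_blockStart {i k : ℕ} (hik : i < k) (hi : i < B.length) :
    blockStart B i < blockStart B k :=
  calc blockStart B i < blockStart B (i + 1) := by rw [blockStart_succ_eq B hi]; omega
    _ ≤ blockStart B k := blockStart_mono B hik

theorem le_of_blockStart_le_of_le_blockFin {i k p : ℕ} (hk : blockStart B k ≤ p)
    (hi : p ≤ blockFin B i) : k ≤ i := by
  by_contra! hik
  have := blockStart_mono B hik
  rw [blockStart_succ] at this
  omega

theorem eq_of_mem_block {i k p : ℕ} (hi : blockStart B i ≤ p ∧ p ≤ blockFin B i)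
    (hk : blockStart B k ≤ p ∧ p ≤ blockFin B k) : i = k :=
  le_antisymm (le_of_blockStart_le_of_le_blockFin B hi.1 hk.2)
    (le_of_blockStart_le_of_le_blockFin B hk.1 hi.2)

variable {B} {n : ℕ} (hB : (B.map fun b => b.len + 1).sum = n)
include hB

theorem blockStart_length : blockStart B B.length = n + 1 := by
  rw [blockStart, List.take_length, hB, add_comm]

theorem blockFin_le {i : ℕ} (hi : i < B.length) : blockFin B i ≤ n := by
  have := blockStart_mono B (Nat.succ_le_of_lt hi)
  rw [blockStart_succ, blockStart_length hB] at this
  omega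

theorem blockStart_le {i : ℕ} (hi : i < B.length) : blockStart B i ≤ n := by
  have := blockFin_le hB hi
  rw [blockFin_eq B hi] at this
  omega

theorem exists_mem_block {p : ℕ} (hp : 1 ≤ p) (hpn : p ≤ n) :
    ∃ i < B.length, blockStart B i ≤ p ∧ p ≤ blockFin B i := by
  have hlen : B.length ≠ 0 := by
    rintro h
    rw [List.length_eq_zero_iff.1 h] at hB
    simp only [List.map_nil, List.sum_nil] at hB
    omega
  obtain ⟨t, ht⟩ := Nat.exists_eq_add_one_of_ne_zero hlen
  have hlast : p ≤ blockFin B t := by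
    have := blockStart_length hB
    rw [ht, blockStart_succ] at this
    omega
  have hex : ∃ i, p ≤ blockFin B i := ⟨_, hlast⟩
  refine ⟨Nat.find hex, (Nat.find_min' hex hlast).trans_lt (by omega), ?_, Nat.find_spec hex⟩
  rcases hi : Nat.find hex with _ | m
  · unfold blockStart; simpa using hp
  · have := Nat.find_min hex (by omega : m < Nat.find hex)
    rw [blockStart_succ]
    omega

theorem sum_lenAt_add_one : ∑ k ∈ range B.length, (lenAt B k + 1) = n := by
  rw [sum_congr rfl fun k hk => (?_ : lenAt B k + 1 = blockStart B (k + 1) - blockStart B k),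
    sum_range_tsub (blockStart_mono B), blockStart_length hB]
  · simp [blockStart]
  · rw [blockStart_succ_eq B (mem_range.1 hk)]; omega

end Blocks

section Parse

variable {α : Type*}

/-- Blocks `k` of `B'` that, literal included, lie in the copied part of a single block of `B`. -/
def insideCopy (B B' : List (LZBlock α)) : Finset ℕ :=
  (range B'.length).filter fun k =>
    ∃ i < B.length, blockStart B i ≤ blockStart B' k ∧ blockStart B' (k + 1) ≤ blockFin B i

variable {n : ℕ} {B B' : List (LZBlock α)}

theorem blockStart_succ_le_of_mem_insideCopy (hB : (B.map fun b => b.len + 1).sum = n) {k : ℕ}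
    (hk : k ∈ insideCopy B B') : blockStart B' (k + 1) ≤ n := by
  obtain ⟨-, i, hi, -, hki⟩ := mem_filter.1 hk
  exact hki.trans (blockFin_le hB hi)

theorem length_le_length_add_card_insideCopy (hB : (B.map fun b => b.len + 1).sum = n)
    (hB' : (B'.map fun b => b.len + 1).sum = n) :
    B'.length ≤ B.length + #(insideCopy B B') := by
  have (k : ℕ) : ∃ i, k < B'.length →
      i < B.length ∧ blockStart B i ≤ blockStart B' k ∧ blockStart B' k ≤ blockFin B i := by
    by_cases hk : k < B'.length
    · obtain ⟨i, hi⟩ := exists_mem_block hB (one_le_blockStart B' k) (blockStart_le hB' hk)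
      exact ⟨i, fun _ => hi⟩
    · exact ⟨0, fun h => absurd h hk⟩
  choose g hg using this
  have hinj : Set.InjOn g ↑(range B'.length \ (insideCopy B B').image (· + 1)) := by
    suffices ∀ k₁ ∈ range B'.length, ∀ k₂ ∈ range B'.length, k₁ < k₂ → g k₁ = g k₂ →
        k₂ ∈ (insideCopy B B').image (· + 1) by
      intro k₁ hk₁ k₂ hk₂ hg12
      simp only [coe_sdiff, Set.mem_sdiff, mem_coe] at hk₁ hk₂
      rcases lt_trichotomy k₁ k₂ with h | h | h
      · exact absurd (this k₁ hk₁.1 k₂ hk₂.1 h hg12) hk₂.2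
      · exact h
      · exact absurd (this k₂ hk₂.1 k₁ hk₁.1 h hg12.symm) hk₁.2
    intro k₁ hk₁ k₂ hk₂ hlt hg12
    rw [mem_range] at hk₁ hk₂
    obtain ⟨hi, hs₁, -⟩ := hg k₁ hk₁
    obtain ⟨-, -, hf₂⟩ := hg k₂ hk₂
    refine mem_image.2 ⟨k₂ - 1, mem_filter.2 ⟨mem_range.2 (by omega), g k₁, hi,
      hs₁.trans (blockStart_mono B' (by omega)), ?_⟩, by omega⟩
    rw [Nat.sub_add_cancel (by omega), hg12]
    exact hf₂
  have hcard := card_le_card_of_injOn (t := range B.length) g (fun k hk => by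
    simp only [coe_sdiff, Set.mem_sdiff, mem_coe, mem_range] at hk ⊢
    exact (hg k hk.1).1) hinj
  have := card_le_card_sdiff_add_card (s := range B'.length) (t := (insideCopy B B').image (· + 1))
  have := card_image_le (s := insideCopy B B') (f := (· + 1))
  rw [card_range] at *
  omega

namespace IsLZ77SRParse

variable {w w' : ℕ → α}

theorem exists_earlier_occurrence (hB : IsLZ77SRParse n w B) {i p L : ℕ} (hi : i < B.length)
    (hp : blockStart B i ≤ p) (hpL : p + L < blockFin B i) :
    ∃ r, 1 ≤ r ∧ r < p ∧ ∀ x ≤ L, w (r + x) = w (p + x) := by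
  obtain ⟨-, -, hcopy, -⟩ := hB.2 ⟨i, hi⟩
  simp only [List.get_eq_getElem] at hcopy
  rw [blockFin_eq B hi] at hpL
  obtain ⟨hq, hqs, hw⟩ := hcopy (by omega)
  refine ⟨B[i].q + (p - blockStart B i), by omega, by omega, fun x hx => ?_⟩
  convert hw (p - blockStart B i + x) (by omega) using 2 <;> omega

theorem exists_ne_of_lt_blockStart (hB : IsLZ77SRParse n w B) {k r : ℕ} (hk : k < B.length)
    (hkn : blockStart B (k + 1) ≤ n) (hr : 1 ≤ r) (hrk : r < blockStart B k) :
    ∃ x ≤ lenAt B k, w (r + x) ≠ w (blockStart B k + x) := by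
  obtain ⟨-, -, -, hmax⟩ := hB.2 ⟨k, hk⟩
  simp only [List.get_eq_getElem, ← lenAt_eq B hk] at hmax
  rw [blockStart_succ_eq B hk] at hkn
  by_contra! h
  exact hmax (by omega) ⟨r, hr, hrk, h⟩

variable {j : ℕ}

theorem exists_source_of_mem_insideCopy (hB : IsLZ77SRParse n w B)
    (hB' : IsLZ77SRParse n w' B') (hw : ∀ p, p ≠ j → w p = w' p) {k : ℕ}
    (hk : k ∈ insideCopy B B') :
    ∃ r < blockStart B' k, (∀ x ≤ lenAt B' k, w (r + x) = w (blockStart B' k + x)) ∧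
      ∃ x ≤ lenAt B' k, r + x = j ∨ blockStart B' k + x = j := by
  have hkn := blockStart_succ_le_of_mem_insideCopy hB.1 hk
  obtain ⟨hk', i, hi, hik, hki⟩ := mem_filter.1 hk
  rw [mem_range] at hk'
  have := blockStart_succ_eq B' hk'
  obtain ⟨r, hr, hrk, hcopy⟩ := hB.exists_earlier_occurrence hi hik (L := lenAt B' k) (by omega)
  obtain ⟨x, hx, hne⟩ := hB'.exists_ne_of_lt_blockStart hk' hkn hr hrk
  refine ⟨r, hrk, hcopy, x, hx, ?_⟩
  by_contra! h
  exact hne (by rw [← hw _ h.1, ← hw _ h.2, hcopy x hx])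

end IsLZ77SRParse

end Parse

section Sensitivity

variable {α : Type*} {n j : ℕ} {w w' : ℕ → α} {B B' : List (LZBlock α)}

namespace IsLZ77SRParse

theorem card_filter_blockStart_le_le_one (hB : IsLZ77SRParse n w B)
    (hB' : IsLZ77SRParse n w' B') (hw : ∀ p, p ≠ j → w p = w' p) :
    #((insideCopy B B').filter (blockStart B' · ≤ j)) ≤ 1 := by
  have hmem (k : ℕ) (hk : k ∈ (insideCopy B B').filter (blockStart B' · ≤ j)) :
      blockStart B' k ≤ j ∧ j ≤ blockFin B' k := by
    obtain ⟨hk, hkj⟩ := mem_filter.1 hk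
    obtain ⟨r, hrk, -, x, hx, hj⟩ := exists_source_of_mem_insideCopy hB hB' hw hk
    have := blockStart_succ_eq B' (mem_range.1 (mem_filter.1 hk).1)
    have := blockStart_succ B' k
    omega
  exact card_le_one.2 fun k₁ hk₁ k₂ hk₂ => eq_of_mem_block B' (hmem k₁ hk₁) (hmem k₂ hk₂)

theorem card_filter_lt_blockStart_le (hB : IsLZ77SRParse n w B)
    (hB' : IsLZ77SRParse n w' B') (hw : ∀ p, p ≠ j → w p = w' p) :
    (#((insideCopy B B').filter (j < blockStart B' ·)) : ℝ) ≤
      (9 : ℝ) ^ ((1 : ℝ) / 3) / 2 * (n : ℝ) ^ ((2 : ℝ) / 3)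
        + (3 : ℝ) ^ ((1 : ℝ) / 3) / 2 * (n : ℝ) ^ ((1 : ℝ) / 3) := by
  set X := (insideCopy B B').filter (j < blockStart B' ·)
  -- past `j` the block of `B'` agrees in `w` and `w'`, so the change sits in its source
  have (k : ℕ) : ∃ r, k ∈ X → r ≤ j ∧ j ≤ r + lenAt B' k ∧
      ∀ x ≤ lenAt B' k, w (r + x) = w (blockStart B' k + x) := by
    by_cases hk : k ∈ X
    · obtain ⟨hk, hjk⟩ := mem_filter.1 hk
      obtain ⟨r, -, hcopy, x, hx, hj⟩ := exists_source_of_mem_insideCopy hB hB' hw hk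
      exact ⟨r, fun _ => ⟨by omega, by omega, hcopy⟩⟩
    · exact ⟨0, fun h => absurd h hk⟩
  choose r hr using this
  have hX (k : ℕ) (hk : k ∈ X) :
      k < B'.length ∧ blockStart B' (k + 1) ≤ n ∧ j < blockStart B' k :=
    ⟨mem_range.1 (mem_filter.1 (mem_filter.1 hk).1).1,
      blockStart_succ_le_of_mem_insideCopy hB.1 (mem_filter.1 hk).1, (mem_filter.1 hk).2⟩
  -- of two blocks with a common source and length, the later could have been copied further
  have hsource (k₁ : ℕ) (hk₁ : k₁ ∈ X) (k₂ : ℕ) (hk₂ : k₂ ∈ X) (hlt : k₁ < k₂)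
      (hr12 : r k₁ = r k₂) (hlen : lenAt B' k₁ = lenAt B' k₂) : False := by
    obtain ⟨hk₁', -, hj₁⟩ := hX k₁ hk₁
    obtain ⟨hk₂', hn₂, hj₂⟩ := hX k₂ hk₂
    obtain ⟨x, hx, hne⟩ := hB'.exists_ne_of_lt_blockStart hk₂' hn₂ (one_le_blockStart B' k₁)
      (blockStart_lt_blockStart B' hlt hk₁')
    apply hne
    rw [← hw _ (by omega), ← hw _ (by omega), ← (hr k₁ hk₁).2.2 x (by omega), hr12,
      (hr k₂ hk₂).2.2 x hx]
  set f : ℕ → ℕ × ℕ := fun k => (j - r k, lenAt B' k + 1)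
  have hinj : Set.InjOn f X := by
    intro k₁ hk₁ k₂ hk₂ hf
    simp only [f, Prod.mk.injEq] at hf
    have hr12 : r k₁ = r k₂ := by
      have := (hr k₁ hk₁).1
      have := (hr k₂ hk₂).1
      omega
    rcases lt_trichotomy k₁ k₂ with h | h | h
    · exact (hsource k₁ hk₁ k₂ hk₂ h hr12 (by omega)).elim
    · exact h
    · exact (hsource k₂ hk₂ k₁ hk₁ h hr12.symm (by omega)).elim
  rw [← card_image_of_injOn hinj]
  refine card_le_of_fst_lt_snd (fun p hp => ?_) ?_
  · obtain ⟨k, hk, rfl⟩ := mem_image.1 hp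
    have := hr k hk
    simp only [f]
    omega
  · rw [sum_image hinj]
    calc ∑ k ∈ X, (lenAt B' k + 1) ≤ ∑ k ∈ range B'.length, (lenAt B' k + 1) :=
          sum_le_sum_of_subset fun k hk => mem_range.2 (hX k hk).1
      _ = n := sum_lenAt_add_one hB'.1

theorem length_le_length_add (hB : IsLZ77SRParse n w B) (hB' : IsLZ77SRParse n w' B')
    (hw : ∀ p, p ≠ j → w p = w' p) :
    (B'.length : ℝ) ≤ B.length + ((9 : ℝ) ^ ((1 : ℝ) / 3) / 2 * (n : ℝ) ^ ((2 : ℝ) / 3)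
        + (3 : ℝ) ^ ((1 : ℝ) / 3) / 2 * (n : ℝ) ^ ((1 : ℝ) / 3) + 1) := by
  have hA := length_le_length_add_card_insideCopy hB.1 hB'.1
  have hsplit := card_filter_add_card_filter_not (s := insideCopy B B') (j < blockStart B' ·)
  simp only [not_lt] at hsplit
  have hle := card_filter_blockStart_le_le_one hB hB' hw
  have hlt := card_filter_lt_blockStart_le hB hB' hw
  have : (B'.length : ℝ) ≤ B.length + #((insideCopy B B').filter (j < blockStart B' ·)) + 1 := by
    exact_mod_cast (by omega : B'.length ≤ B.length + _ + 1)
  linarith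

end IsLZ77SRParse

end Sensitivity

/-- Theorem: upper bound on the global sensitivity of LZ77 with
self-referencing, `W = n`. Over a finite alphabet `Σ`, for every pair of
neighboring strings `w ∼ w' ∈ Σⁿ` (so the global sensitivity obeys the same
bound),
`||Compress_SR(w)| − |Compress_SR(w')|| ≤ ((∛9/2)·n^(2/3) + (∛3/2)·n^(1/3) + 3)·(2⌈log₂ n⌉ + ⌈log₂ |Σ|⌉)`. -/
theorem lz77SR_global_sensitivity_upper {α : Type*} [Fintype α] (n : ℕ) :
    ∀ w w' : ℕ → α, Neighbor n w w' →
    ∀ B B' : List (LZBlock α),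
      IsLZ77SRParse n w B → IsLZ77SRParse n w' B' →
      ((((B.length : ℤ) * (codeLen n (Fintype.card α) : ℤ)
          - (B'.length : ℤ) * (codeLen n (Fintype.card α) : ℤ)).natAbs : ℝ))
        ≤ ((9 : ℝ) ^ ((1 : ℝ) / 3) / 2 * (n : ℝ) ^ ((2 : ℝ) / 3)
            + (3 : ℝ) ^ ((1 : ℝ) / 3) / 2 * (n : ℝ) ^ ((1 : ℝ) / 3) + 3)
          * (codeLen n (Fintype.card α) : ℝ) := by
  rintro w w' ⟨j, -, -, -, hw⟩ B B' hB hB'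
  have h₁ := hB.length_le_length_add hB' hw
  have h₂ := hB'.length_le_length_add hB fun p hp => (hw p hp).symm
  rw [← sub_mul, Int.natAbs_mul, Int.natAbs_natCast, Nat.cast_mul, Nat.cast_natAbs]
  refine mul_le_mul_of_nonneg_right ?_ (Nat.cast_nonneg _)
  push_cast
  rw [abs_le]
  constructor <;> linarith
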